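/- Let c be a d×d correlation matrix, r the rank of its lower-right (d−1)×(d−1) block, and (m_r, k_r, p̃) an extended Cholesky decomposition of that block. With p, m, and č built as block matrices from this data (č having identity lower-right block and first row/column (1, (m_r^{-1}c_1^r)^T, 0)), one has c = p m č m^T p^T and č is itself a correlation matrix. -/

import Mathlib

/-
Conjugating by the permutation `p` turns `c` into `c' = pᵀ c p = [[1, bᵀ], [b, M Mᵀ]]` with
`M = [[m_r, 0], [k_r, 0]]`. By the Schur complement of the unit corner, positive semidefiniteness
of `c'` means `(b ⬝ z)² ≤ z ⬝ M Mᵀ z` for all `z`. Now `M = L E` with `L = [[m_r, 0], [k_r, 1]]`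
invertible and `E` the projection onto the first `r` coordinates, so `b' = L⁻¹ b` satisfies
`(b' ⬝ y)² ≤ |E y|²`; this forces `b'` to vanish off the first block and `|b'| ≤ 1`. Since
`b'` restricted to the first block is `m_r⁻¹ c_1^r = v`, we get `b = M (v, 0)`, which is exactly the
block form of `m č mᵀ`, and `č` is positive semidefinite because the Schur complement of its
identity block is `1 - |v|² ≥ 0`.
-/

open Matrix

def IsCorrelation {ι : Type*} [Fintype ι] (x : Matrix ι ι ℝ) : Prop :=
  x.PosSemidef ∧ ∀ i, x i i = 1

def unitBordered {n : Type*} (b : n → ℝ) (D : Matrix n n ℝ) :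
    Matrix (Unit ⊕ n) (Unit ⊕ n) ℝ :=
  fromBlocks 1 (replicateRow Unit b) (replicateCol Unit b) D

section

variable {m n : Type*}

lemma eq_unitBordered_of_posSemidef {c : Matrix (Unit ⊕ n) (Unit ⊕ n) ℝ} (hc : c.PosSemidef)
    (h11 : c (Sum.inl ()) (Sum.inl ()) = 1) :
    c = unitBordered (fun j => c (Sum.inl ()) (Sum.inr j)) (c.submatrix Sum.inr Sum.inr) := by
  ext (_ | i) (_ | j)
  · simpa [unitBordered] using h11
  · rfl
  · simpa [unitBordered] using hc.1.apply (Sum.inl ()) (Sum.inr i)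
  · rfl

lemma fromBlocks_one_mul_unitBordered_mul_transpose [Fintype n] (M : Matrix m n ℝ)
    (b : n → ℝ) (D : Matrix n n ℝ) :
    fromBlocks (1 : Matrix Unit Unit ℝ) 0 0 M * unitBordered b D *
        (fromBlocks (1 : Matrix Unit Unit ℝ) 0 0 M)ᵀ =
      unitBordered (M *ᵥ b) (M * D * Mᵀ) := by
  rw [unitBordered, unitBordered, fromBlocks_transpose, fromBlocks_multiply, fromBlocks_multiply,
    replicateCol_mulVec, replicateRow_mulVec, transpose_mul, transpose_replicateCol]
  simp

lemma posSemidef_unitBordered_one [Fintype n] [DecidableEq n] {w : n → ℝ} (hw : w ⬝ᵥ w ≤ 1) :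
    (unitBordered w 1).PosSemidef := by
  have hB : replicateCol Unit w = (replicateRow Unit w)ᴴ := by simp
  have : Invertible (1 : Matrix n n ℝ) := invertibleOne
  rw [unitBordered, hB, PosDef.fromBlocks₂₂ _ _ PosDef.one, inv_one, Matrix.mul_one,
    ← hB, replicateRow_mul_replicateCol]
  have hschur : (1 : Matrix Unit Unit ℝ) - of (fun _ _ => w ⬝ᵥ w) =
      diagonal fun _ => 1 - w ⬝ᵥ w := by
    ext; simp
  rw [hschur, posSemidef_diagonal_iff]
  intro; simpa using hw

lemma isCorrelation_unitBordered_one [Fintype n] [DecidableEq n] {w : n → ℝ} (hw : w ⬝ᵥ w ≤ 1) :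
    IsCorrelation (unitBordered w 1) :=
  ⟨posSemidef_unitBordered_one hw, by rintro (_ | i) <;> simp [unitBordered]⟩

lemma sq_dotProduct_le_of_posSemidef_unitBordered [Fintype n] [DecidableEq n] {b : n → ℝ}
    {D : Matrix n n ℝ} (h : (unitBordered b D).PosSemidef) (z : n → ℝ) :
    (b ⬝ᵥ z) ^ 2 ≤ z ⬝ᵥ D *ᵥ z := by
  have hB : replicateCol Unit b = (replicateRow Unit b)ᴴ := by simp
  have : Invertible (1 : Matrix Unit Unit ℝ) := invertibleOne
  rw [unitBordered, hB, PosDef.fromBlocks₁₁ _ _ PosDef.one, inv_one, Matrix.mul_one, ← hB] at h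
  have hz := h.dotProduct_mulVec_nonneg z
  have hcol : replicateCol Unit b *ᵥ Function.const Unit (b ⬝ᵥ z) = (b ⬝ᵥ z) • b := by
    ext; simp [mulVec, dotProduct, mul_comm]
  rw [sub_mulVec, dotProduct_sub, ← mulVec_mulVec, replicateRow_mulVec_eq_const, hcol,
    dotProduct_smul, star_trivial, dotProduct_comm z b, smul_eq_mul] at hz
  linarith [sq (b ⬝ᵥ z)]

lemma sq_dotProduct_inv_mulVec_le [Fintype n] [DecidableEq n] {L D : Matrix n n ℝ}
    (hL : IsUnit L.det) {b : n → ℝ} (h : ∀ z, (b ⬝ᵥ z) ^ 2 ≤ z ⬝ᵥ (L * D * Lᵀ) *ᵥ z) (y : n → ℝ) :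
    ((L⁻¹ *ᵥ b) ⬝ᵥ y) ^ 2 ≤ y ⬝ᵥ D *ᵥ y := by
  have hLT : Lᵀ * L⁻¹ᵀ = 1 := by rw [← transpose_mul, nonsing_inv_mul _ hL, transpose_one]
  have hq : ∀ z, z ⬝ᵥ (L * D * Lᵀ) *ᵥ z = (Lᵀ *ᵥ z) ⬝ᵥ D *ᵥ (Lᵀ *ᵥ z) := by
    intro z; rw [← mulVec_mulVec, ← mulVec_mulVec, dotProduct_mulVec, mulVec_transpose]
  have hz := h (L⁻¹ᵀ *ᵥ y)
  rwa [hq, mulVec_mulVec, hLT, one_mulVec, dotProduct_mulVec, vecMul_transpose] at hz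

lemma comp_inr_eq_zero_and_dotProduct_le_one_of_sq_dotProduct_le [Fintype m] [Fintype n]
    [DecidableEq n] {b : m ⊕ n → ℝ}
    (h : ∀ y : m ⊕ n → ℝ, (b ⬝ᵥ y) ^ 2 ≤ (y ∘ Sum.inl) ⬝ᵥ (y ∘ Sum.inl)) :
    b ∘ Sum.inr = 0 ∧ (b ∘ Sum.inl) ⬝ᵥ (b ∘ Sum.inl) ≤ 1 := by
  have hsplit (u : m → ℝ) (w : n → ℝ) :
      b ⬝ᵥ Sum.elim u w = (b ∘ Sum.inl) ⬝ᵥ u + (b ∘ Sum.inr) ⬝ᵥ w := by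
    rw [← sumElim_dotProduct_sumElim, Sum.elim_comp_inl_inr]
  constructor
  · ext j
    have hj := h (Sum.elim 0 (Pi.single j 1))
    rw [hsplit, Sum.elim_comp_inl, dotProduct_zero, zero_dotProduct, zero_add,
      dotProduct_single, mul_one] at hj
    exact pow_eq_zero_iff two_ne_zero |>.mp (le_antisymm hj (sq_nonneg _))
  · have hb := h (Sum.elim (b ∘ Sum.inl) 0)
    rw [hsplit, Sum.elim_comp_inl, dotProduct_zero, add_zero] at hb
    nlinarith

lemma eq_fromBlocks_mulVec_of_sq_dotProduct_le [Fintype m] [Fintype n] [DecidableEq m]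
    [DecidableEq n] {mr : Matrix m m ℝ} (hmr : IsUnit mr.det) (kr : Matrix n m ℝ) {b : m ⊕ n → ℝ}
    (h : ∀ z, (b ⬝ᵥ z) ^ 2 ≤
      z ⬝ᵥ (fromBlocks mr 0 kr 0 * (fromBlocks mr 0 kr (0 : Matrix n n ℝ))ᵀ) *ᵥ z) :
    b = fromBlocks mr 0 kr (0 : Matrix n n ℝ) *ᵥ Sum.elim (mr⁻¹ *ᵥ (b ∘ Sum.inl)) 0 ∧
      (mr⁻¹ *ᵥ (b ∘ Sum.inl)) ⬝ᵥ (mr⁻¹ *ᵥ (b ∘ Sum.inl)) ≤ 1 := by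
  set L : Matrix (m ⊕ n) (m ⊕ n) ℝ := fromBlocks mr 0 kr 1
  have hL : IsUnit L.det := by simpa [L, det_fromBlocks_zero₁₂] using hmr
  have hLE : fromBlocks mr 0 kr 0 * (fromBlocks mr 0 kr (0 : Matrix n n ℝ))ᵀ =
      L * fromBlocks 1 0 0 0 * Lᵀ := by
    simp [L, fromBlocks_transpose, fromBlocks_multiply]
  set u := (L⁻¹ *ᵥ b) ∘ Sum.inl
  have hE (y : m ⊕ n → ℝ) :
      y ⬝ᵥ fromBlocks 1 0 0 (0 : Matrix n n ℝ) *ᵥ y = (y ∘ Sum.inl) ⬝ᵥ (y ∘ Sum.inl) := by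
    rw [← Sum.elim_comp_inl_inr y, fromBlocks_mulVec, sumElim_dotProduct_sumElim]
    simp
  have hLb (y : m ⊕ n → ℝ) : ((L⁻¹ *ᵥ b) ⬝ᵥ y) ^ 2 ≤ (y ∘ Sum.inl) ⬝ᵥ (y ∘ Sum.inl) :=
    hE y ▸ sq_dotProduct_inv_mulVec_le hL (hLE ▸ h) y
  obtain ⟨hu0, hu⟩ := comp_inr_eq_zero_and_dotProduct_le_one_of_sq_dotProduct_le hLb
  have hb : b = Sum.elim (mr *ᵥ u) (kr *ᵥ u) := by
    have : L⁻¹ *ᵥ b = Sum.elim u 0 := by rw [← hu0, Sum.elim_comp_inl_inr]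
    rw [← one_mulVec b, ← mul_nonsing_inv _ hL, ← mulVec_mulVec, this, fromBlocks_mulVec]
    simp
  have hu_eq : mr⁻¹ *ᵥ (b ∘ Sum.inl) = u := by
    rw [hb, Sum.elim_comp_inl, mulVec_mulVec, nonsing_inv_mul _ hmr, one_mulVec]
  rw [hu_eq]
  refine ⟨?_, hu⟩
  rw [hb, fromBlocks_mulVec]
  simp

end

/-- The index set `Unit ⊕ (Fin r ⊕ Fin s)` encodes the block sizes `1 + r + s = d` with `r` the rank
of the lower-right block. -/
theorem stmt12_general (r s : ℕ)
    (c : Matrix (Unit ⊕ (Fin r ⊕ Fin s)) (Unit ⊕ (Fin r ⊕ Fin s)) ℝ)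
    (hc : IsCorrelation c)
    (σ : Equiv.Perm (Fin r ⊕ Fin s))
    (ptilde : Matrix (Fin r ⊕ Fin s) (Fin r ⊕ Fin s) ℝ)
    (hp : ∀ i j, ptilde i j = if σ j = i then 1 else 0)
    (mr : Matrix (Fin r) (Fin r) ℝ)
    (hmr_inv : IsUnit mr.det)
    (kr : Matrix (Fin s) (Fin r) ℝ)
    (hchol : ptilde * c.submatrix Sum.inr Sum.inr * ptildeᵀ =
      Matrix.fromBlocks mr 0 kr 0 * (Matrix.fromBlocks mr 0 kr 0)ᵀ)
    (p m cch : Matrix (Unit ⊕ (Fin r ⊕ Fin s)) (Unit ⊕ (Fin r ⊕ Fin s)) ℝ)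
    (hpdef : p = Matrix.fromBlocks 1 0 0 ptildeᵀ)
    (hmdef : m = Matrix.fromBlocks 1 0 0 (Matrix.fromBlocks mr 0 kr 0))
    (v : Fin r → ℝ)
    (hvdef : v = mr⁻¹.mulVec (fun i => (pᵀ * c * p) (Sum.inl ()) (Sum.inr (Sum.inl i))))
    (hcch : cch = Matrix.fromBlocks 1
      (Matrix.of fun _ j => Sum.elim v (fun _ => 0) j)
      (Matrix.of fun i _ => Sum.elim v (fun _ => 0) i) 1) :
    c = p * m * cch * mᵀ * pᵀ ∧ IsCorrelation cch := by
  obtain ⟨hpsd, hdiag⟩ := hc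
  have hptilde : ptilde = (σ⁻¹).permMatrix ℝ := by
    ext i j
    simp [hp, Equiv.eq_symm_apply, eq_comm]
  set P : Matrix (Unit ⊕ (Fin r ⊕ Fin s)) (Unit ⊕ (Fin r ⊕ Fin s)) ℝ := fromBlocks 1 0 0 ptilde
  have hpP : p = Pᵀ := by simp [P, hpdef, fromBlocks_transpose]
  have hptilde_orth : ptildeᵀ * ptilde = 1 := by
    rw [hptilde, transpose_permMatrix, inv_inv, ← permMatrix_mul, inv_mul_cancel, permMatrix_one]
  have hp_orth : p * pᵀ = 1 := by
    simp [hpP, P, fromBlocks_transpose, fromBlocks_multiply, hptilde_orth]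
  set M := fromBlocks mr 0 kr (0 : Matrix (Fin s) (Fin s) ℝ)
  set b := ptilde *ᵥ fun j => c (Sum.inl ()) (Sum.inr j)
  have hc' : pᵀ * c * p = unitBordered b (M * Mᵀ) := by
    rw [hpP, transpose_transpose]
    conv_lhs => rw [eq_unitBordered_of_posSemidef hpsd (hdiag _)]
    rw [fromBlocks_one_mul_unitBordered_mul_transpose, hchol]
  have hc'_psd : (unitBordered b (M * Mᵀ)).PosSemidef := by
    simpa [hc'] using hpsd.conjTranspose_mul_mul_same p
  obtain ⟨hbM, hv⟩ := eq_fromBlocks_mulVec_of_sq_dotProduct_le hmr_inv kr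
    (sq_dotProduct_le_of_posSemidef_unitBordered hc'_psd)
  have hv' : mr⁻¹ *ᵥ (b ∘ Sum.inl) = v := by rw [hvdef, hc']; rfl
  rw [hv'] at hbM hv
  have hcch' : cch = unitBordered (Sum.elim v 0) 1 := hcch
  have hconj : m * cch * mᵀ = pᵀ * c * p := by
    rw [hcch', hmdef, fromBlocks_one_mul_unitBordered_mul_transpose, Matrix.mul_one, ← hbM, hc']
  refine ⟨?_, hcch' ▸ isCorrelation_unitBordered_one (by simpa using hv)⟩
  calc c = p * pᵀ * c * (p * pᵀ) := by rw [hp_orth, Matrix.one_mul, Matrix.mul_one]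
    _ = p * (m * cch * mᵀ) * pᵀ := by rw [hconj]; simp only [Matrix.mul_assoc]
    _ = p * m * cch * mᵀ * pᵀ := by simp only [Matrix.mul_assoc]

/-- Reduction of a correlation matrix via an extended Cholesky decomposition of its
lower-right block: `c = p m č mᵀ pᵀ` where `č` is again a correlation matrix with identity
lower-right block. The index set `Unit ⊕ (Fin r ⊕ Fin s)` encodes the block sizes
`1 + r + s = d` with `r` the rank of the lower-right block. -/
theorem stmt12 (r s : ℕ)
    (c : Matrix (Unit ⊕ (Fin r ⊕ Fin s)) (Unit ⊕ (Fin r ⊕ Fin s)) ℝ)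
    (hc : IsCorrelation c)
    (hrank : (c.submatrix Sum.inr Sum.inr).rank = r)
    (σ : Equiv.Perm (Fin r ⊕ Fin s))
    (ptilde : Matrix (Fin r ⊕ Fin s) (Fin r ⊕ Fin s) ℝ)
    (hp : ∀ i j, ptilde i j = if σ j = i then 1 else 0)
    (mr : Matrix (Fin r) (Fin r) ℝ)
    (hmr_lower : ∀ i j : Fin r, i < j → mr i j = 0)
    (hmr_inv : IsUnit mr.det)
    (kr : Matrix (Fin s) (Fin r) ℝ)
    (hchol : ptilde * c.submatrix Sum.inr Sum.inr * ptildeᵀ =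
      Matrix.fromBlocks mr 0 kr 0 * (Matrix.fromBlocks mr 0 kr 0)ᵀ)
    (p m cch : Matrix (Unit ⊕ (Fin r ⊕ Fin s)) (Unit ⊕ (Fin r ⊕ Fin s)) ℝ)
    (hpdef : p = Matrix.fromBlocks 1 0 0 ptildeᵀ)
    (hmdef : m = Matrix.fromBlocks 1 0 0 (Matrix.fromBlocks mr 0 kr 0))
    (v : Fin r → ℝ)
    (hvdef : v = mr⁻¹.mulVec (fun i => (pᵀ * c * p) (Sum.inl ()) (Sum.inr (Sum.inl i))))
    (hcch : cch = Matrix.fromBlocks 1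
      (Matrix.of fun _ j => Sum.elim v (fun _ => 0) j)
      (Matrix.of fun i _ => Sum.elim v (fun _ => 0) i) 1) :
    c = p * m * cch * mᵀ * pᵀ ∧ IsCorrelation cch :=
  stmt12_general r s c hc σ ptilde hp mr hmr_inv kr hchol p m cch hpdef hmdef v hvdef hcch
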